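/- arXiv:2508.15330 — 10 statements merged into one kernel-verified Lean document; each statement's English description precedes it below -/
import Mathlib

section
/- Let a, b, c, d, e, f, g, h, i be positive integers satisfying the six diamond equations a*d = 1+b, d*g = 1+e, g*i = 1+h, b*e = (1+c)*(1+d), e*h = (1+f)*(1+g), c*f = 1+e. Then the entries d, e, f, g, h, i are determined by the first diagonal (a, b, c) as follows: a*d = b+1, a*b*e = (c+1)*(a+b+1), a*b*c*f = a*b+a*c+b*c+a+b+c+1, b*(b+1)*g = a*b+a*c+b*c+a+b+c+1, b*c*h = (a+1)*(b+c+1), and c*i = b+1. -/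
/-- For an arithmetic Y-frieze pattern of width 3 with fundamental
domain entries (a,b,c,d,e,f,g,h,i), the entries d,e,f,g,h,i are determined by
the first diagonal (a,b,c). -/
theorem yfrieze3_entries_from_first_diagonal
    (a b c d e f g h i : ℕ)
    (ha : 0 < a) (hb : 0 < b) (hc : 0 < c) (hd : 0 < d) (he : 0 < e)
    (hf : 0 < f) (hg : 0 < g) (hh : 0 < h) (hi : 0 < i)
    (e1 : a * d = 1 + b)
    (e2 : d * g = 1 + e)
    (e3 : g * i = 1 + h)
    (e4 : b * e = (1 + c) * (1 + d))
    (e5 : e * h = (1 + f) * (1 + g))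
    (e6 : c * f = 1 + e) :
    a * d = b + 1 ∧
    a * b * e = (c + 1) * (a + b + 1) ∧
    a * b * c * f = a * b + a * c + b * c + a + b + c + 1 ∧
    b * (b + 1) * g = a * b + a * c + b * c + a + b + c + 1 ∧
    b * c * h = (a + 1) * (b + c + 1) ∧
    c * i = b + 1 := by
  have E1 : (a:ℤ) * d = 1 + b := by exact_mod_cast e1
  have E2 : (d:ℤ) * g = 1 + e := by exact_mod_cast e2
  have E3 : (g:ℤ) * i = 1 + h := by exact_mod_cast e3
  have E4 : (b:ℤ) * e = (1 + c) * (1 + d) := by exact_mod_cast e4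
  have E5 : (e:ℤ) * h = (1 + f) * (1 + g) := by exact_mod_cast e5
  have E6 : (c:ℤ) * f = 1 + e := by exact_mod_cast e6
  have ha' : (0:ℤ) < a := by exact_mod_cast ha
  have hb' : (0:ℤ) < b := by exact_mod_cast hb
  have hc' : (0:ℤ) < c := by exact_mod_cast hc
  have H2 : (a:ℤ) * b * e = (c + 1) * (a + b + 1) := by
    linear_combination (a:ℤ) * E4 + (1 + (c:ℤ)) * E1
  have H3 : (a:ℤ) * b * c * f = a*b + a*c + b*c + a + b + c + 1 := by
    linear_combination (a:ℤ) * b * E6 + (a:ℤ) * E4 + (1 + (c:ℤ)) * E1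
  have H4 : (b:ℤ) * (b + 1) * g = a*b + a*c + b*c + a + b + c + 1 := by
    linear_combination (a:ℤ) * b * E2 + (a:ℤ) * E4 + ((1:ℤ) + c - b * g) * E1
  -- entry h, after cancelling K = (c+1)(a+b+1)·a·b·(b+1)
  have hK : (((c:ℤ) + 1) * (a + b + 1) * a * b * (b + 1)) ≠ 0 := by positivity
  have H5 : (b:ℤ) * c * h = (a + 1) * (b + c + 1) := by
    refine mul_left_cancel₀ hK ?_
    linear_combination ((a:ℤ)^2 * b^3 * c * (b+1)) * E5
      - ((a:ℤ) * b * (b+1) * (b * c * h)) * H2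
      + ((a:ℤ) * b * ((a:ℤ)+1) * ((b:ℤ)+1) * ((c:ℤ)+1)) * H4
      + ((a:ℤ) * b * ((b:ℤ) * (b+1) * (1 + g))) * H3
  -- entry i, after cancelling b·S
  have hS : ((b:ℤ) * ((a:ℤ)*b + a*c + b*c + a + b + c + 1)) ≠ 0 := by positivity
  have H6 : (c:ℤ) * i = b + 1 := by
    refine mul_left_cancel₀ hS ?_
    linear_combination ((b:ℤ) * (b+1)) * H5 + ((b:ℤ)^2 * c * (b+1)) * E3
      - ((b:ℤ) * c * i) * H4
  refine ⟨by omega, ?_, ?_, ?_, ?_, ?_⟩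
  · exact_mod_cast H2
  · exact_mod_cast H3
  · exact_mod_cast H4
  · exact_mod_cast H5
  · exact_mod_cast H6
end

section
/- Let a, b, c, d, e, f, g, h, i be positive integers satisfying the six diamond equations a*d = 1+b, d*g = 1+e, g*i = 1+h, b*e = (1+c)*(1+d), e*h = (1+f)*(1+g), c*f = 1+e. Then the following six inequalities hold: (i) b+1 ≥ a, (ii) (c+1)*(a+b+1) ≥ a*b, (iii) a*b+a*c+b*c+a+b+c+1 ≥ a*b*c, (iv) a*b+a*c+b*c+a+b+c+1 ≥ b*(b+1), (v) (a+1)*(b+c+1) ≥ b*c, (vi) b+1 ≥ c. -/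
/-- The six necessary inequalities for an arithmetic Y-frieze
pattern of width 3. -/
theorem yfrieze3_inequalities
    (a b c d e f g h i : ℕ)
    (ha : 0 < a) (hb : 0 < b) (hc : 0 < c) (hd : 0 < d) (he : 0 < e)
    (hf : 0 < f) (hg : 0 < g) (hh : 0 < h) (hi : 0 < i)
    (e1 : a * d = 1 + b)
    (e2 : d * g = 1 + e)
    (e3 : g * i = 1 + h)
    (e4 : b * e = (1 + c) * (1 + d))
    (e5 : e * h = (1 + f) * (1 + g))
    (e6 : c * f = 1 + e) :
    b + 1 ≥ a ∧
    (c + 1) * (a + b + 1) ≥ a * b ∧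
    a * b + a * c + b * c + a + b + c + 1 ≥ a * b * c ∧
    a * b + a * c + b * c + a + b + c + 1 ≥ b * (b + 1) ∧
    (a + 1) * (b + c + 1) ≥ b * c ∧
    b + 1 ≥ c := by
  -- cast hypotheses to ℤ
  have E1 : (a:ℤ) * d = 1 + b := by exact_mod_cast e1
  have E2 : (d:ℤ) * g = 1 + e := by exact_mod_cast e2
  have E3 : (g:ℤ) * i = 1 + h := by exact_mod_cast e3
  have E4 : (b:ℤ) * e = (1 + c) * (1 + d) := by exact_mod_cast e4
  have E5 : (e:ℤ) * h = (1 + f) * (1 + g) := by exact_mod_cast e5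
  have E6 : (c:ℤ) * f = 1 + e := by exact_mod_cast e6
  -- step 1: d ∣ c
  have hdc : d ∣ c := by
    have h1 : (c:ℤ) * (1 + d) = d * (b * g - (a + 1)) := by
      linear_combination E1 - (b:ℤ) * E2 - E4
    have h2 : (d:ℤ) ∣ (c:ℤ) * (1 + d) := ⟨b * g - (a + 1), h1⟩
    have hcop : IsCoprime (d:ℤ) (1 + d) := ⟨-1, 1, by ring⟩
    have : (d:ℤ) ∣ (c:ℤ) := hcop.dvd_of_dvd_mul_right h2
    exact_mod_cast this
  -- step 2: g ∣ f
  have hgf : g ∣ f := by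
    have h1 : (f:ℤ) * (1 + g) = g * (h * d - (1 + i)) := by
      linear_combination E3 - (h:ℤ) * E2 - E5
    have h2 : (g:ℤ) ∣ (f:ℤ) * (1 + g) := ⟨h * d - (1 + i), h1⟩
    have hcop : IsCoprime (g:ℤ) (1 + g) := ⟨-1, 1, by ring⟩
    have : (g:ℤ) ∣ (f:ℤ) := hcop.dvd_of_dvd_mul_right h2
    exact_mod_cast this
  -- step 3: f = g and c = d
  obtain ⟨k, hk⟩ := hdc
  have hkf : k * f = g := by
    have h1 : d * (k * f) = d * g := by
      rw [← mul_assoc, ← hk, e6, e2]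
    exact Nat.eq_of_mul_eq_mul_left hd h1
  have hfg : f = g := Nat.dvd_antisymm ⟨k, by rw [← hkf]; ring⟩ hgf
  have hk1 : k = 1 := by
    have : k * f = f := by rw [hkf, hfg]
    have := Nat.eq_of_mul_eq_mul_right hf (by linarith [this] : k * f = 1 * f)
    exact this
  have hcd : c = d := by rw [hk, hk1, mul_one]
  subst hcd hfg
  -- reduced equations
  have E4' : (b:ℤ) * e = (1 + c) ^ 2 := by rw [E4]; ring
  have E5' : (e:ℤ) * h = (1 + f) ^ 2 := by rw [E5]; ring
  have ha1 : (1:ℤ) ≤ a := by exact_mod_cast ha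
  have hb1 : (1:ℤ) ≤ b := by exact_mod_cast hb
  have hc1 : (1:ℤ) ≤ c := by exact_mod_cast hc
  have he1 : (1:ℤ) ≤ e := by exact_mod_cast he
  have hf1 : (1:ℤ) ≤ f := by exact_mod_cast hf
  have hh1 : (1:ℤ) ≤ h := by exact_mod_cast hh
  have hi1 : (1:ℤ) ≤ i := by exact_mod_cast hi
  -- renamed: after subst, E1 : a*c = 1+b, E2 : c*f = 1+e, E3 : f*i = 1+h
  -- goal 1 and 6
  have ha0 : (0:ℤ) ≤ a := by linarith
  have hc0 : (0:ℤ) ≤ c := by linarith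
  have G1 : (a:ℤ) ≤ b + 1 := by
    have hmm : (a:ℤ) * 1 ≤ a * c := mul_le_mul_of_nonneg_left hc1 ha0
    linarith [E1, hmm]
  have G6 : (c:ℤ) ≤ b + 1 := by
    have hmm : (c:ℤ) * 1 ≤ c * a := mul_le_mul_of_nonneg_left ha1 hc0
    have hca : (c:ℤ) * a = a * c := mul_comm _ _
    linarith [E1, hmm, hca]
  -- goal 2
  have hid2 : ((c:ℤ) + 1) * (a + b + 1) = a * b * e := by
    linear_combination (-(c:ℤ) - 1) * E1 - (a:ℤ) * E4'
  have G2 : ((c:ℤ) + 1) * (a + b + 1) ≥ a * b := by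
    have hmm : (a:ℤ) * b * 1 ≤ a * b * e :=
      mul_le_mul_of_nonneg_left he1 (by positivity)
    linarith [hid2, hmm]
  -- goals 3 & 4
  have hec : (c:ℤ) - 1 ≤ e := by
    have hmm : (c:ℤ) * 1 ≤ c * f := mul_le_mul_of_nonneg_left hf1 hc0
    linarith [E2, hmm]
  have hb0 : (0:ℤ) ≤ b := by linarith
  have hbc : (b:ℤ) * (c - 1) ≤ (1 + c) ^ 2 := by
    have hmm : (b:ℤ) * (c - 1) ≤ b * e := mul_le_mul_of_nonneg_left hec hb0
    linarith [E4', hmm]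
  have hac3 : (a:ℤ) * c ≤ a + c + 3 := by
    have h2 : (c:ℤ) * (a * (c - 1)) ≤ c * (c + 3) := by
      calc (c:ℤ) * (a * (c - 1)) = (c - 1) + b * (c - 1) := by
            linear_combination ((c:ℤ) - 1) * E1
        _ ≤ (c - 1) + (1 + c) ^ 2 := by linarith [hbc]
        _ = c * (c + 3) := by ring
    have h3 : (a:ℤ) * (c - 1) ≤ c + 3 :=
      le_of_mul_le_mul_left h2 (by linarith)
    have h4 : (a:ℤ) * (c - 1) = a * c - a := by ring
    linarith
  have hb4 : (b:ℤ) ≤ a + c + 2 := by linarith [E1, hac3]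
  have hid3 : (a:ℤ) * b + a * c + b * c + a + b + c + 1 = (a * c) * (a + c + 2) := by
    linear_combination (-(a:ℤ) - c - 1) * E1
  have G4 : (a:ℤ) * b + a * c + b * c + a + b + c + 1 ≥ b * (b + 1) := by
    have hp : (a:ℤ) * c * b ≤ (a * c) * (a + c + 2) :=
      mul_le_mul_of_nonneg_left hb4 (by positivity)
    have : (a:ℤ) * c * b = b * (b + 1) := by linear_combination (b:ℤ) * E1
    linarith [hid3, hp, this]
  have G3 : (a:ℤ) * b + a * c + b * c + a + b + c + 1 ≥ a * b * c := by
    have : (a:ℤ) * b * c = b * (b + 1) := by linear_combination (b:ℤ) * E1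
    linarith [G4, this]
  -- goal 5
  have hee : (e:ℤ) ≤ (1 + f) ^ 2 := by
    have hmm : (e:ℤ) * 1 ≤ e * h := mul_le_mul_of_nonneg_left hh1 (by linarith)
    linarith [E5', hmm]
  have hid5 : (b:ℤ) * c * (1 + f) = (c + 1) * (b + c + 1) := by
    linear_combination (b:ℤ) * E2 + E4'
  have hm1 : ((b:ℤ) * c) ^ 2 * e ≤ ((b * c)) ^ 2 * (1 + f) ^ 2 :=
    mul_le_mul_of_nonneg_left hee (by positivity)
  have hm2 : ((b:ℤ) * c) ^ 2 * e = (c + 1) ^ 2 * (b * c ^ 2) := by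
    linear_combination (b:ℤ) * c ^ 2 * E4'
  have hm3 : ((b:ℤ) * c) ^ 2 * (1 + f) ^ 2 = (c + 1) ^ 2 * (b + c + 1) ^ 2 := by
    have : ((b:ℤ) * c * (1 + f)) ^ 2 = ((c + 1) * (b + c + 1)) ^ 2 := by rw [hid5]
    linear_combination this
  have hkey : (b:ℤ) * c ^ 2 ≤ (b + c + 1) ^ 2 := by
    have hp : (0:ℤ) < (c + 1) ^ 2 := by positivity
    have : (c + 1 : ℤ) ^ 2 * (b * c ^ 2) ≤ (c + 1) ^ 2 * (b + c + 1) ^ 2 := by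
      linarith [hm1, hm2, hm3]
    exact le_of_mul_le_mul_left this hp
  have hb5 : (b:ℤ) ≤ (a + 1) ^ 2 := by
    have h1 : ((b:ℤ) + c + 1) ^ 2 = c ^ 2 * (a + 1) ^ 2 := by
      linear_combination (-(b:ℤ) - c - 1 - c * a - c) * E1
    have h2 : (c:ℤ) ^ 2 * b ≤ c ^ 2 * (a + 1) ^ 2 := by linarith [hkey, h1, mul_comm (b:ℤ) (c ^ 2)]
    have hp : (0:ℤ) < (c:ℤ) ^ 2 := by positivity
    exact le_of_mul_le_mul_left h2 hp
  have G5 : ((a:ℤ) + 1) * (b + c + 1) ≥ b * c := by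
    have hid : ((a:ℤ) + 1) * (b + c + 1) = c * (a + 1) ^ 2 := by
      linear_combination (-(a:ℤ) - 1) * E1
    have hp : (c:ℤ) * b ≤ c * (a + 1) ^ 2 :=
      mul_le_mul_of_nonneg_left hb5 (by linarith)
    linarith [hid, hp]
  refine ⟨?_, ?_, ?_, ?_, ?_, ?_⟩
  · exact_mod_cast G1
  · exact_mod_cast G2
  · exact_mod_cast G3
  · exact_mod_cast G4
  · exact_mod_cast G5
  · exact_mod_cast G6
end

section
/- Let a, b, c be positive integers satisfying the inequalities (iv) a*b+a*c+b*c+a+b+c+1 ≥ b*(b+1), (v) (a+1)*(b+c+1) ≥ b*c, and (vi) b+1 ≥ c. If a ≤ 4, then c ≤ 11 and b ≤ 18. -/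
/-- Proposition 2.2: if a ≤ 4 then c ≤ 11 and b ≤ 18. -/
theorem yfrieze3_prop22
    (a b c : ℕ) (ha : 0 < a) (hb : 0 < b) (hc : 0 < c)
    (h4 : a * b + a * c + b * c + a + b + c + 1 ≥ b * (b + 1))
    (h5 : (a + 1) * (b + c + 1) ≥ b * c)
    (h6 : b + 1 ≥ c)
    (ha4 : a ≤ 4) :
    c ≤ 11 ∧ b ≤ 18 := by
  have hc11 : c ≤ 11 := by
    by_contra h
    push_neg at h
    have hb11 : 11 ≤ b := by omega
    have h12 : 12 ≤ c := h
    nlinarith [mul_le_mul h12 hb11 (by norm_num) (by omega)]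
  refine ⟨hc11, ?_⟩
  by_contra h
  push_neg at h
  have h19 : 19 ≤ b := h
  nlinarith [mul_le_mul h19 h19 (by norm_num) (by omega)]
end

section
/- Let a, b, c, d, e, f, g, h, i be positive integers satisfying the six diamond equations a*d = 1+b, d*g = 1+e, g*i = 1+h, b*e = (1+c)*(1+d), e*h = (1+f)*(1+g), c*f = 1+e. Then either (a ≤ 4 and c ≤ 11 and b ≤ 18) or (a ≤ 11 and c ≤ 4 and b ≤ 18). -/
private lemma yf_eq_of (C D F G : ℤ) (hD : 1 ≤ D) (hG : 1 ≤ G)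
    (hDC : D ≤ C) (hGF : G ≤ F) (hCF : C * F = D * G) : C = D := by
  have h1 : 0 ≤ (C - D) * F := mul_nonneg (by linarith) (by linarith)
  have h2 : 0 ≤ D * (F - G) := mul_nonneg (by linarith) (by linarith)
  have h3 : (C - D) * F + D * (F - G) = 0 := by linear_combination hCF
  have h4 : (C - D) * F = 0 := by linarith
  rcases mul_eq_zero.mp h4 with h5 | h5
  · linarith
  · linarith

private lemma yf_two (A G C : ℤ) (hA : 1 ≤ A) (hG : 1 ≤ G) (hC : 1 ≤ C)
    (key : A * G * C = A + G + C + 2) : 2 ≤ G * C := by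
  by_contra hcon
  push_neg at hcon
  have h1 : G * C ≤ 1 := by omega
  have h2 : A * (G * C) ≤ A * 1 := mul_le_mul_of_nonneg_left h1 (by linarith)
  nlinarith

private lemma yf_five (A G C : ℤ) (hA : 1 ≤ A) (hG : 1 ≤ G) (hC : 1 ≤ C)
    (key : A * G * C = A + G + C + 2) : A ≤ 5 := by
  have h2 : 2 ≤ G * C := yf_two A G C hA hG hC key
  by_contra hcon
  push_neg at hcon
  have h6 : 6 ≤ A := by omega
  have P1 : 0 ≤ (A - 6) * (G * C - 1) := mul_nonneg (by omega) (by omega)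
  have s1 : 6 * (G * C) ≤ G + C + 8 := by nlinarith
  have P2 : 0 ≤ (G - 1) * (C - 1) := mul_nonneg (by omega) (by omega)
  have s2 : 5 * (G + C) ≤ 14 := by nlinarith
  have hG1 : G = 1 := by omega
  have hC1 : C = 1 := by omega
  subst hG1; subst hC1
  simp at key
  linarith

private lemma yf_prod (A G C : ℤ) (hA : 1 ≤ A) (hG : 1 ≤ G) (hC : 1 ≤ C)
    (key : A * G * C = A + G + C + 2) : A * C ≤ A + C + 3 := by
  have h1 : 1 ≤ A * C := by nlinarith
  have P : 0 ≤ (G - 1) * (A * C - 1) := mul_nonneg (by omega) (by omega)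
  nlinarith

private lemma yf_55 (A G C : ℤ) (hG : 1 ≤ G)
    (key : A * G * C = A + G + C + 2) (hA5 : A = 5) (hC5 : C = 5) : False := by
  subst hA5; subst hC5
  linarith

/-- Lemma: bounds for the first diagonal of an arithmetic
Y-frieze pattern of width 3. -/
theorem yfrieze3_bounds
    (a b c d e f g h i : ℕ)
    (ha : 0 < a) (hb : 0 < b) (hc : 0 < c) (hd : 0 < d) (he : 0 < e)
    (hf : 0 < f) (hg : 0 < g) (hh : 0 < h) (hi : 0 < i)
    (e1 : a * d = 1 + b)
    (e2 : d * g = 1 + e)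
    (e3 : g * i = 1 + h)
    (e4 : b * e = (1 + c) * (1 + d))
    (e5 : e * h = (1 + f) * (1 + g))
    (e6 : c * f = 1 + e) :
    (a ≤ 4 ∧ c ≤ 11 ∧ b ≤ 18) ∨ (a ≤ 11 ∧ c ≤ 4 ∧ b ≤ 18) := by
  have hA : (1:ℤ) ≤ (a:ℤ) := by exact_mod_cast ha
  have hB : (1:ℤ) ≤ (b:ℤ) := by exact_mod_cast hb
  have hC : (1:ℤ) ≤ (c:ℤ) := by exact_mod_cast hc
  have hD : (1:ℤ) ≤ (d:ℤ) := by exact_mod_cast hd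
  have hE : (1:ℤ) ≤ (e:ℤ) := by exact_mod_cast he
  have hF : (1:ℤ) ≤ (f:ℤ) := by exact_mod_cast hf
  have hG : (1:ℤ) ≤ (g:ℤ) := by exact_mod_cast hg
  have E1 : (a:ℤ) * d = 1 + b := by exact_mod_cast e1
  have E2 : (d:ℤ) * g = 1 + e := by exact_mod_cast e2
  have E3 : (g:ℤ) * i = 1 + h := by exact_mod_cast e3
  have E4 : (b:ℤ) * e = (1 + c) * (1 + d) := by exact_mod_cast e4
  have E5 : (e:ℤ) * h = (1 + f) * (1 + g) := by exact_mod_cast e5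
  have E6 : (c:ℤ) * f = 1 + e := by exact_mod_cast e6
  -- d divides c, g divides f
  have hdvd : (d:ℤ) ∣ (c:ℤ) :=
    ⟨(a:ℤ)*d*g - a - g - 1 - c, by
      linear_combination (-1:ℤ)*E4 - (e:ℤ)*E1 + (1 - (a:ℤ)*d)*E2⟩
  have hgdvd : (g:ℤ) ∣ (f:ℤ) :=
    ⟨(d:ℤ)*g*i - d - i - 1 - f, by
      linear_combination (-1:ℤ)*E5 - (h:ℤ)*E2 + (1 - (d:ℤ)*g)*E3⟩
  have hdc : (d:ℤ) ≤ c := Int.le_of_dvd (by linarith) hdvd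
  have hgf : (g:ℤ) ≤ f := Int.le_of_dvd (by linarith) hgdvd
  have hcf : (c:ℤ) * f = (d:ℤ) * g := E6.trans E2.symm
  -- hence c = d
  have hcd : (c:ℤ) = d := yf_eq_of (c:ℤ) (d:ℤ) (f:ℤ) (g:ℤ) hD hG hdc hgf hcf
  have E1' : (a:ℤ) * c = 1 + b := by rw [hcd]; exact E1
  have E2' : (c:ℤ) * g = 1 + e := by rw [hcd]; exact E2
  have E4' : (b:ℤ) * e = (1 + c) * (1 + c) := by rw [← hcd] at E4; exact E4
  -- the key identity
  have key0 : (c:ℤ) * ((a:ℤ)*g*c - a - g - c - 2) = 0 := by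
    linear_combination (e:ℤ) * E1' + ((a:ℤ)*c - 1) * E2' + E4'
  have key : (a:ℤ)*(g:ℤ)*(c:ℤ) = a + g + c + 2 := by
    rcases mul_eq_zero.mp key0 with h0 | h0
    · exfalso; linarith
    · linarith
  have keyc : (c:ℤ)*(g:ℤ)*(a:ℤ) = c + g + a + 2 := by linear_combination key
  -- bounds
  have hA5 : (a:ℤ) ≤ 5 := yf_five (a:ℤ) (g:ℤ) (c:ℤ) hA hG hC key
  have hC5 : (c:ℤ) ≤ 5 := yf_five (c:ℤ) (g:ℤ) (a:ℤ) hC hG hA keyc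
  have hACsum : (a:ℤ)*(c:ℤ) ≤ (a:ℤ) + c + 3 := yf_prod (a:ℤ) (g:ℤ) (c:ℤ) hA hG hC key
  have ha5 : a ≤ 5 := by exact_mod_cast hA5
  have hc5 : c ≤ 5 := by exact_mod_cast hC5
  have hb18 : b ≤ 18 := by
    have hBle : (b:ℤ) ≤ 12 := by linarith [E1']
    have : b ≤ 12 := by exact_mod_cast hBle
    omega
  rcases le_or_gt a 4 with h4 | h4
  · exact Or.inl ⟨h4, by omega, hb18⟩
  · have ha5' : a = 5 := by omega
    have hc4 : c ≤ 4 := by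
      by_contra hcon
      push_neg at hcon
      have hc5' : c = 5 := by omega
      exact yf_55 (a:ℤ) (g:ℤ) (c:ℤ) hG key (by exact_mod_cast congrArg (Nat.cast : ℕ → ℤ) ha5')
        (by exact_mod_cast congrArg (Nat.cast : ℕ → ℤ) hc5')
    exact Or.inr ⟨by omega, hc4, hb18⟩
end

section
/- Let a, b, c, d, e, f, g, h, i be positive integers satisfying the six diamond equations a*d = 1+b, d*g = 1+e, g*i = 1+h, b*e = (1+c)*(1+d), e*h = (1+f)*(1+g), c*f = 1+e. Then there exists a closed arithmetic Coxeter frieze pattern F of width 3 whose second row is the 6-periodic sequence repeating (a, d, g, i, c, f); that is, there exists F : ℤ → ℤ → ℤ with F r (r-1) = 0, F r r = 1, F r (r+4) = 1 for all r, F r s ≥ 1 whenever r ≤ s ≤ r+4, F r s * F (r+1) (s+1) − F r (s+1) * F (r+1) s = 1 whenever r ≤ s ≤ r+3, and F r (r+2) = y r for all r, where y : ℤ → ℤ is the 6-periodic sequence with (y 0, y 1, y 2, y 3, y 4, y 5) = (a, d, g, i, c, f). (This expresses the surjectivity of the map p_3 from arithmetic Coxeter frieze patterns of width 3 to arithmetic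 Y-frieze patterns of width 3.) -/
/-!
Multiplying the two middle diamond equations and using `cf = 1 + e`, `d ≤ 2b`, `g ≤ 2h` gives
`(1 + e) e² ≤ 16 (2 + e)²`, so `dg = 1 + e ≤ 19`; an exhaustive search then leaves exactly ten
arithmetic Y-friezes of width 3. Each of them is the second row `m r * m (r + 1) - 1` of the
width-3 frieze with an explicit 6-periodic quiddity `m`, whose third row is `m (r + 4)`.
-/

structure IsArithCoxeterFrieze (n : ℕ) (F : ℤ → ℤ → ℤ) : Prop where
  apply_sub_one : ∀ r : ℤ, F r (r - 1) = 0
  apply_self : ∀ r : ℤ, F r r = 1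
  apply_add_width : ∀ r : ℤ, F r (r + n + 1) = 1
  one_le : ∀ r s : ℤ, r ≤ s → s ≤ r + n + 1 → 1 ≤ F r s
  diamond : ∀ r s : ℤ, r ≤ s → s ≤ r + n →
    F r s * F (r + 1) (s + 1) - F r (s + 1) * F (r + 1) s = 1

def frieze3OfQuiddity (m : ℤ → ℤ) (r s : ℤ) : ℤ :=
  if s - r = -1 then 0 else if s - r = 0 then 1 else if s - r = 1 then m r
  else if s - r = 2 then m r * m (r + 1) - 1 else if s - r = 3 then m (r + 4)
  else if s - r = 4 then 1 else 0

theorem isArithCoxeterFrieze_frieze3OfQuiddity (m : ℤ → ℤ) (hpos : ∀ r, 1 ≤ m r)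
    (hrow : ∀ r, 2 ≤ m r * m (r + 1))
    (hdiamond : ∀ r,
      (m r * m (r + 1) - 1) * (m (r + 1) * m (r + 2) - 1) - m (r + 4) * m (r + 1) = 1)
    (hglide : ∀ r, m (r + 4) * m (r + 5) = m (r + 1) * m (r + 2)) :
    IsArithCoxeterFrieze 3 (frieze3OfQuiddity m) where
  apply_sub_one r := by simp [frieze3OfQuiddity]
  apply_self r := by simp [frieze3OfQuiddity]
  apply_add_width r := by simp [frieze3OfQuiddity, add_assoc]
  one_le r s h₁ h₂ := by
    obtain ⟨k, hk₀, hk, rfl⟩ : ∃ k, 0 ≤ k ∧ k ≤ 4 ∧ s = r + k :=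
      ⟨s - r, by omega, by omega, by ring⟩
    simp only [frieze3OfQuiddity, add_sub_cancel_left]
    have := hpos r
    have := hpos (r + 4)
    have := hrow r
    interval_cases k <;> simp <;> linarith
  diamond r s h₁ h₂ := by
    obtain ⟨k, hk₀, hk, rfl⟩ : ∃ k, 0 ≤ k ∧ k ≤ 3 ∧ s = r + k :=
      ⟨s - r, by omega, by omega, by ring⟩
    simp only [frieze3OfQuiddity]
    rw [show r + k + 1 - (r + 1) = k by ring, show r + k + 1 - r = k + 1 by ring,
      show r + k - (r + 1) = k - 1 by ring, show r + k - r = k by ring]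
    have := hdiamond r
    have := hglide r
    interval_cases k <;> simp [add_assoc] <;> linarith

def secondRow (q : ZMod 6 → ℤ) (k : ZMod 6) : ℤ := q k * q (k + 1) - 1

def IsWidth3Quiddity (q : ZMod 6 → ℤ) : Prop :=
  ∀ k, 1 ≤ q k ∧ 1 ≤ secondRow q k ∧
    secondRow q k * secondRow q (k + 1) - q (k + 4) * q (k + 1) = 1 ∧
    secondRow q (k + 4) = secondRow q (k + 1)

instance : DecidablePred IsWidth3Quiddity := fun _ => by
  unfold IsWidth3Quiddity; infer_instance

theorem IsWidth3Quiddity.exists_frieze {q : ZMod 6 → ℤ} (hq : IsWidth3Quiddity q) :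
    ∃ F, IsArithCoxeterFrieze 3 F ∧ ∀ r : ℤ, F r (r + 2) = secondRow q r := by
  refine ⟨frieze3OfQuiddity fun r => q r,
    isArithCoxeterFrieze_frieze3OfQuiddity _ (fun r => (hq r).1) ?_ ?_ ?_,
    fun r => by simp [frieze3OfQuiddity, secondRow]⟩ <;>
  · intro r
    obtain ⟨-, h₁, h₂, h₃⟩ := hq r
    simp only [secondRow] at h₁ h₂ h₃
    push_cast
    ring_nf at h₁ h₂ h₃ ⊢
    linarith

def secondRowPeriod (q : ZMod 6 → ℤ) : ℤ × ℤ × ℤ × ℤ × ℤ × ℤ :=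
  (secondRow q 0, secondRow q 1, secondRow q 2, secondRow q 3, secondRow q 4, secondRow q 5)

def width3Quiddities : List (ZMod 6 → ℤ) :=
  [![3, 2, 1, 3, 2, 1], ![2, 2, 1, 4, 1, 2], ![3, 1, 2, 3, 1, 2], ![2, 3, 1, 2, 3, 1],
   ![1, 3, 1, 3, 1, 3], ![2, 1, 3, 2, 1, 3], ![1, 4, 1, 2, 2, 2], ![1, 2, 2, 2, 1, 4],
   ![1, 3, 2, 1, 3, 2], ![1, 2, 3, 1, 2, 3]]

theorem isWidth3Quiddity_of_mem_width3Quiddities :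
    ∀ q ∈ width3Quiddities, IsWidth3Quiddity q := by
  decide

theorem map_secondRowPeriod_width3Quiddities :
    width3Quiddities.map secondRowPeriod =
      [(5, 1, 2, 5, 1, 2), (3, 1, 3, 3, 1, 3), (2, 1, 5, 2, 1, 5), (5, 2, 1, 5, 2, 1),
       (2, 2, 2, 2, 2, 2), (1, 2, 5, 1, 2, 5), (3, 3, 1, 3, 3, 1), (1, 3, 3, 1, 3, 3),
       (2, 5, 1, 2, 5, 1), (1, 5, 2, 1, 5, 2)] := by
  decide

theorem Function.Periodic.eq_of_forall_lt {α : Type*} {f g : ℤ → α} {n : ℕ}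
    (hf : Periodic f n) (hg : Periodic g n) (hn : 0 < n) (h : ∀ k < n, f k = g k) : f = g := by
  have reduce : ∀ φ : ℤ → α, Periodic φ n → ∀ r, φ r = φ (r % n).toNat := fun φ hφ r => by
    have := hφ.sub_int_mul_eq (x := r) (r / n)
    rw [Int.cast_id] at this
    rw [Int.toNat_of_nonneg (Int.emod_nonneg _ (by omega)), Int.emod_def, mul_comm, this]
  funext r
  have := Int.emod_lt_of_pos r (by omega : (0 : ℤ) < n)
  rw [reduce f hf, reduce g hg, h _ (by omega)]

structure IsArithYFrieze3 (a b c d e f g h i : ℤ) : Prop where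
  a_pos : 0 < a
  b_pos : 0 < b
  c_pos : 0 < c
  d_pos : 0 < d
  f_pos : 0 < f
  g_pos : 0 < g
  h_pos : 0 < h
  i_pos : 0 < i
  ad_eq : a * d = 1 + b
  dg_eq : d * g = 1 + e
  gi_eq : g * i = 1 + h
  be_eq : b * e = (1 + c) * (1 + d)
  eh_eq : e * h = (1 + f) * (1 + g)
  cf_eq : c * f = 1 + e

theorem le_two_mul_of_mul_eq_one_add {a b d : ℤ} (ha : 0 < a) (hb : 0 < b)
    (h : a * d = 1 + b) : d ≤ 2 * b := by
  nlinarith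

theorem add_le_one_add_mul {x y : ℤ} (hx : 0 < x) (hy : 0 < y) : x + y ≤ 1 + x * y := by
  nlinarith [mul_nonneg (by linarith : (0 : ℤ) ≤ x - 1) (by linarith : (0 : ℤ) ≤ y - 1)]

namespace IsArithYFrieze3

variable {a b c d e f g h i : ℤ}

theorem e_le_eighteen (hY : IsArithYFrieze3 a b c d e f g h i) : e ≤ 18 := by
  obtain ⟨ha, hb, hc, hd, hf, hg, hh, hi, ad, dg, gi, be, eh, cf⟩ := hY
  have hdb : d ≤ 2 * b := le_two_mul_of_mul_eq_one_add ha hb ad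
  have hgh : g ≤ 2 * h := le_two_mul_of_mul_eq_one_add hi hh (by linarith)
  have hcf : c + f ≤ 2 + e := by linarith [add_le_one_add_mul hc hf]
  have hdg : (1 + d) * (1 + g) ≤ 2 * (2 + e) := by linarith [add_le_one_add_mul hd hg]
  have key : (b * e) * (e * h) = (2 + e + c + f) * ((1 + d) * (1 + g)) := by
    rw [be, eh]; linear_combination (1 + d) * (1 + g) * cf
  have hcube : (1 + e) * e ^ 2 ≤ 16 * (2 + e) ^ 2 :=
    calc (1 + e) * e ^ 2 = (d * g) * e ^ 2 := by rw [dg]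
      _ ≤ (2 * b) * (2 * h) * e ^ 2 := by gcongr
      _ = 4 * ((2 + e + c + f) * ((1 + d) * (1 + g))) := by rw [← key]; ring
      _ ≤ 4 * ((2 * (2 + e)) * (2 * (2 + e))) := by gcongr <;> linarith
      _ = 16 * (2 + e) ^ 2 := by ring
  nlinarith

set_option maxHeartbeats 1000000 in
theorem mem_map_secondRowPeriod (hY : IsArithYFrieze3 a b c d e f g h i) :
    (a, d, g, i, c, f) ∈ width3Quiddities.map secondRowPeriod := by
  have he := hY.e_le_eighteen
  obtain ⟨ha, hb, hc, hd, hf, hg, hh, hi, ad, dg, gi, be, eh, cf⟩ := hY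
  simp only [map_secondRowPeriod_width3Quiddities, List.mem_cons, Prod.mk.injEq,
    List.not_mem_nil, or_false]
  obtain rfl : e = d * g - 1 := by linarith
  have hd' : d ≤ 19 := by nlinarith
  have hg' : g ≤ 19 := by nlinarith
  have hc' : c ≤ d * g := by nlinarith
  -- `norm_num` first discards the rows of the table refuted by `d`, `g`, `c`, so that `omega`
  -- does not case-split over the whole disjunction.
  interval_cases d <;> interval_cases g <;> (try (exfalso; omega)) <;> interval_cases c <;>
    first | (exfalso; omega) | (norm_num; omega)

end IsArithYFrieze3

theorem p3_surjective_general
    (a b c d e f g h i : ℤ)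
    (ha : 0 < a) (hb : 0 < b) (hc : 0 < c) (hd : 0 < d)
    (hf : 0 < f) (hg : 0 < g) (hh : 0 < h) (hi : 0 < i)
    (e1 : a * d = 1 + b)
    (e2 : d * g = 1 + e)
    (e3 : g * i = 1 + h)
    (e4 : b * e = (1 + c) * (1 + d))
    (e5 : e * h = (1 + f) * (1 + g))
    (e6 : c * f = 1 + e)
    (y : ℤ → ℤ)
    (hyper : ∀ r : ℤ, y (r + 6) = y r)
    (hy0 : y 0 = a) (hy1 : y 1 = d) (hy2 : y 2 = g)
    (hy3 : y 3 = i) (hy4 : y 4 = c) (hy5 : y 5 = f) :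
    ∃ F : ℤ → ℤ → ℤ,
      (∀ r : ℤ, F r (r - 1) = 0) ∧
      (∀ r : ℤ, F r r = 1) ∧
      (∀ r : ℤ, F r (r + 4) = 1) ∧
      (∀ r s : ℤ, r ≤ s → s ≤ r + 4 → 1 ≤ F r s) ∧
      (∀ r s : ℤ, r ≤ s → s ≤ r + 3 →
        F r s * F (r + 1) (s + 1) - F r (s + 1) * F (r + 1) s = 1) ∧
      (∀ r : ℤ, F r (r + 2) = y r) := by
  have hY : IsArithYFrieze3 a b c d e f g h i :=
    ⟨ha, hb, hc, hd, hf, hg, hh, hi, e1, e2, e3, e4, e5, e6⟩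
  obtain ⟨q, hq, hrow⟩ := List.mem_map.1 hY.mem_map_secondRowPeriod
  obtain ⟨F, hF, hF₂⟩ := (isWidth3Quiddity_of_mem_width3Quiddities q hq).exists_frieze
  simp only [secondRowPeriod, Prod.mk.injEq] at hrow
  have hy : y = fun r : ℤ => secondRow q r := by
    have hperiodic : Function.Periodic (fun r : ℤ => secondRow q r) (6 : ℕ) := fun r => by
      simp [show (6 : ZMod 6) = 0 from rfl]
    refine Function.Periodic.eq_of_forall_lt hyper hperiodic (by norm_num) fun k hk => ?_
    interval_cases k <;> simp [hy0, hy1, hy2, hy3, hy4, hy5, hrow]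
  subst hy
  exact ⟨F, hF.apply_sub_one, hF.apply_self,
    fun r => by simpa [add_assoc] using hF.apply_add_width r,
    fun r s h₁ h₂ => hF.one_le r s h₁ (by omega), hF.diamond, hF₂⟩

/-- Corollary, surjectivity of p₃: every arithmetic Y-frieze
pattern of width 3 arises from a closed arithmetic Coxeter frieze pattern of
width 3. -/
theorem p3_surjective
    (a b c d e f g h i : ℤ)
    (ha : 0 < a) (hb : 0 < b) (hc : 0 < c) (hd : 0 < d) (he : 0 < e)
    (hf : 0 < f) (hg : 0 < g) (hh : 0 < h) (hi : 0 < i)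
    (e1 : a * d = 1 + b)
    (e2 : d * g = 1 + e)
    (e3 : g * i = 1 + h)
    (e4 : b * e = (1 + c) * (1 + d))
    (e5 : e * h = (1 + f) * (1 + g))
    (e6 : c * f = 1 + e)
    (y : ℤ → ℤ)
    (hyper : ∀ r : ℤ, y (r + 6) = y r)
    (hy0 : y 0 = a) (hy1 : y 1 = d) (hy2 : y 2 = g)
    (hy3 : y 3 = i) (hy4 : y 4 = c) (hy5 : y 5 = f) :
    ∃ F : ℤ → ℤ → ℤ,
      (∀ r : ℤ, F r (r - 1) = 0) ∧
      (∀ r : ℤ, F r r = 1) ∧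
      (∀ r : ℤ, F r (r + 4) = 1) ∧
      (∀ r s : ℤ, r ≤ s → s ≤ r + 4 → 1 ≤ F r s) ∧
      (∀ r s : ℤ, r ≤ s → s ≤ r + 3 →
        F r s * F (r + 1) (s + 1) - F r (s + 1) * F (r + 1) s = 1) ∧
      (∀ r : ℤ, F r (r + 2) = y r) :=
  p3_surjective_general a b c d e f g h i ha hb hc hd hf hg hh hi e1 e2 e3 e4 e5 e6 y hyper hy0 hy1
    hy2 hy3 hy4 hy5
end

section
/- Let a, b, c, d, e, f, g, h, i, j, k, l, m, n be positive integers satisfying the ten diamond equations a*e = 1+b, b*f = (1+e)*(1+c), c*g = (1+f)*(1+d), d*h = 1+g, e*i = 1+f, f*j = (1+i)*(1+g), g*k = (1+j)*(1+h), i*l = 1+j, j*m = (1+l)*(1+k), l*n = 1+m. Then the entries are determined by the first diagonal (a,b,c,d) as follows: a*e = b+1; a*b*f = (c+1)*(a+b+1); a*b*c*g = (d+1)*(a*b+a*c+b*c+a+b+c+1); a*b*c*d*h = a*b*c+a*b*d+a*c*d+b*c*d+a*b+a*c+a*d+b*c+b*d+c*d+a+b+c+d+1; b*(b+1)*i = a*b+a*c+b*c+a+b+c+1;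 b*(b+1)*c*(c+1)*j = (b+c+1)*(a*b*c+a*b*d+a*c*d+b*c*d+a*b+a*c+a*d+b*c+b*d+c*d+a+b+c+d+1); b*c*d*k = (a+1)*(b*c+b*d+c*d+b+c+d+1); c*(c+1)*l = b*c+b*d+c*d+b+c+d+1; c*d*m = (b+1)*(c+d+1); d*n = c+1. -/
/-- For an arithmetic Y-frieze pattern of width 4, the entries are
determined by the first diagonal (a,b,c,d). -/
theorem yfrieze4_entries_from_first_diagonal
    (a b c d e f g h i j k l m n : ℕ)
    (ha : 0 < a) (hb : 0 < b) (hc : 0 < c) (hd : 0 < d) (he : 0 < e)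
    (hf : 0 < f) (hg : 0 < g) (hh : 0 < h) (hi : 0 < i) (hj : 0 < j)
    (hk : 0 < k) (hl : 0 < l) (hm : 0 < m) (hn : 0 < n)
    (e1 : a * e = 1 + b)
    (e2 : b * f = (1 + e) * (1 + c))
    (e3 : c * g = (1 + f) * (1 + d))
    (e4 : d * h = 1 + g)
    (e5 : e * i = 1 + f)
    (e6 : f * j = (1 + i) * (1 + g))
    (e7 : g * k = (1 + j) * (1 + h))
    (e8 : i * l = 1 + j)
    (e9 : j * m = (1 + l) * (1 + k))
    (e10 : l * n = 1 + m) :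
    a * e = b + 1 ∧
    a * b * f = (c + 1) * (a + b + 1) ∧
    a * b * c * g = (d + 1) * (a * b + a * c + b * c + a + b + c + 1) ∧
    a * b * c * d * h =
      a * b * c + a * b * d + a * c * d + b * c * d + a * b + a * c + a * d +
        b * c + b * d + c * d + a + b + c + d + 1 ∧
    b * (b + 1) * i = a * b + a * c + b * c + a + b + c + 1 ∧
    b * (b + 1) * c * (c + 1) * j =
      (b + c + 1) *
        (a * b * c + a * b * d + a * c * d + b * c * d + a * b + a * c +
          a * d + b * c + b * d + c * d + a + b + c + d + 1) ∧
    b * c * d * k = (a + 1) * (b * c + b * d + c * d + b + c + d + 1) ∧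
    c * (c + 1) * l = b * c + b * d + c * d + b + c + d + 1 ∧
    c * d * m = (b + 1) * (c + d + 1) ∧
    d * n = c + 1 := by
  have ha' : (0:ℚ) < a := by exact_mod_cast ha
  have hb' : (0:ℚ) < b := by exact_mod_cast hb
  have hc' : (0:ℚ) < c := by exact_mod_cast hc
  have hd' : (0:ℚ) < d := by exact_mod_cast hd
  have qe1 : (a:ℚ) * e = 1 + b := by exact_mod_cast e1
  have qe2 : (b:ℚ) * f = (1 + e) * (1 + c) := by exact_mod_cast e2
  have qe3 : (c:ℚ) * g = (1 + f) * (1 + d) := by exact_mod_cast e3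
  have qe4 : (d:ℚ) * h = 1 + g := by exact_mod_cast e4
  have qe5 : (e:ℚ) * i = 1 + f := by exact_mod_cast e5
  have qe6 : (f:ℚ) * j = (1 + i) * (1 + g) := by exact_mod_cast e6
  have qe7 : (g:ℚ) * k = (1 + j) * (1 + h) := by exact_mod_cast e7
  have qe8 : (i:ℚ) * l = 1 + j := by exact_mod_cast e8
  have qe9 : (j:ℚ) * m = (1 + l) * (1 + k) := by exact_mod_cast e9
  have qe10 : (l:ℚ) * n = 1 + m := by exact_mod_cast e10
  -- abbreviations as rationals
  set A : ℚ := (a:ℚ) with hA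
  set B : ℚ := (b:ℚ) with hB
  set C : ℚ := (c:ℚ) with hC
  set D : ℚ := (d:ℚ) with hD
  have hS3 : (0:ℚ) < A*B + A*C + B*C + A + B + C + 1 := by positivity
  have hS4 : (0:ℚ) < A*B*C + A*B*D + A*C*D + B*C*D + A*B + A*C + A*D + B*C + B*D + C*D + A + B + C + D + 1 := by positivity
  have hT : (0:ℚ) < B*C + B*D + C*D + B + C + D + 1 := by positivity
  -- Q2
  have Q2 : A * B * f = (C + 1) * (A + B + 1) := by
    linear_combination A * qe2 + (1 + C) * qe1
  -- Q3
  have Q3 : A * B * C * g = (D + 1) * (A*B + A*C + B*C + A + B + C + 1) := by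
    linear_combination (A*B) * qe3 + (1 + D) * Q2
  -- Q4
  have Q4 : A * B * C * D * h = A*B*C + A*B*D + A*C*D + B*C*D + A*B + A*C + A*D + B*C + B*D + C*D + A + B + C + D + 1 := by
    linear_combination (A*B*C) * qe4 + Q3
  -- Q5
  have Q5 : B * (B + 1) * i = A*B + A*C + B*C + A + B + C + 1 := by
    linear_combination (A*B) * qe5 + Q2 - (B*(i:ℚ)) * qe1
  -- Q6 : cancel A*B*(A+B+1)
  have Q6 : B*(B+1)*C*(C+1) * j = (B + C + 1) * (A*B*C + A*B*D + A*C*D + B*C*D + A*B + A*C + A*D + B*C + B*D + C*D + A + B + C + D + 1) := by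
    have hCne : (A*B*(A+B+1)) ≠ 0 := by positivity
    refine mul_left_cancel₀ hCne ?_
    linear_combination (B*(B+1)*(A*B*C)*(A*B)) * qe6
      - (B*(B+1)*(A*B*C)*(j:ℚ)) * Q2
      + ((A*B)*(A*B*C)*(1 + (g:ℚ))) * Q5
      + ((A*B)*(B*(B+1) + (A*B + A*C + B*C + A + B + C + 1))) * Q3
  -- Q7 : cancel A*B*(B+1)*C*(C+1)*(D+1)*S3
  have Q7 : B*C*D * k = (A + 1) * (B*C + B*D + C*D + B + C + D + 1) := by
    have hCne : (A*B*(B+1)*C*(C+1)*(D+1)*(A*B + A*C + B*C + A + B + C + 1)) ≠ 0 := by positivity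
    refine mul_left_cancel₀ hCne ?_
    linear_combination (B*(B+1)*C*(C+1)*(A*B*C*D)*(A*B*C)) * qe7
      - (B*(B+1)*C*(C+1)*(A*B*C*D)*(k:ℚ)) * Q3
      + ((A*B*C)*(A*B*C*D)*(1 + (h:ℚ))) * Q6
      + ((A*B*C)*(B*(B+1)*C*(C+1) + (B+C+1)*(A*B*C + A*B*D + A*C*D + B*C*D + A*B + A*C + A*D + B*C + B*D + C*D + A + B + C + D + 1))) * Q4
  -- Q8 : cancel B*(B+1)*S3
  have Q8 : C*(C+1) * l = B*C + B*D + C*D + B + C + D + 1 := by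
    have hCne : (B*(B+1)*(A*B + A*C + B*C + A + B + C + 1)) ≠ 0 := by positivity
    refine mul_left_cancel₀ hCne ?_
    linear_combination ((B*(B+1))*(B*(B+1)*C*(C+1))) * qe8
      - ((B*(B+1)*C*(C+1))*(l:ℚ)) * Q5
      + (B*(B+1)) * Q6
  -- Q9 : cancel B*C*(C+1)*(B+C+1)*S4
  have Q9 : C*D * m = (B + 1) * (C + D + 1) := by
    have hCne : (B*C*(C+1)*(B+C+1)*(A*B*C + A*B*D + A*C*D + B*C*D + A*B + A*C + A*D + B*C + B*D + C*D + A + B + C + D + 1)) ≠ 0 := by positivity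
    refine mul_left_cancel₀ hCne ?_
    linear_combination ((C*(C+1))*(B*C*D)*(B*(B+1)*C*(C+1))) * qe9
      - ((C*(C+1))*(B*C*D)*(m:ℚ)) * Q6
      + ((B*(B+1)*C*(C+1))*(B*C*D)*(1 + (k:ℚ))) * Q8
      + ((B*(B+1)*C*(C+1))*(C*(C+1) + (B*C + B*D + C*D + B + C + D + 1))) * Q7
  -- Q10 : cancel C*T
  have Q10 : D * n = C + 1 := by
    have hCne : (C*(B*C + B*D + C*D + B + C + D + 1)) ≠ 0 := by positivity
    refine mul_left_cancel₀ hCne ?_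
    linear_combination ((C*(C+1))*(C*D)) * qe10
      - ((C*D)*(n:ℚ)) * Q8
      + (C*(C+1)) * Q9
  simp only [hA, hB, hC, hD] at Q2 Q3 Q4 Q5 Q6 Q7 Q8 Q9 Q10
  refine ⟨by omega, ?_, ?_, ?_, ?_, ?_, ?_, ?_, ?_, ?_⟩
  · exact_mod_cast Q2
  · exact_mod_cast Q3
  · exact_mod_cast Q4
  · exact_mod_cast Q5
  · exact_mod_cast Q6
  · exact_mod_cast Q7
  · exact_mod_cast Q8
  · exact_mod_cast Q9
  · exact_mod_cast Q10
end

section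
/- Let a, b, c, d, e, f, g, h, i, j, k, l, m, n be positive integers satisfying the ten diamond equations a*e = 1+b, b*f = (1+e)*(1+c), c*g = (1+f)*(1+d), d*h = 1+g, e*i = 1+f, f*j = (1+i)*(1+g), g*k = (1+j)*(1+h), i*l = 1+j, j*m = (1+l)*(1+k), l*n = 1+m. Then the following ten inequalities hold: (i) b+1 ≥ a; (ii) (c+1)*(a+b+1) ≥ a*b; (iii) (d+1)*(a*b+a*c+b*c+a+b+c+1) ≥ a*b*c; (iv) a*b*c+a*b*d+a*c*d+b*c*d+a*b+a*c+a*d+b*c+b*d+c*d+a+b+c+d+1 ≥ a*b*c*d; (v) a*b+a*c+b*c+a+b+c+1 ≥ b*(b+1); (vi) (b+c+1)*(a*b*c+a*b*d+a*c*d+b*c*d+a*b+a*c+a*d+b*c+b*d+c*d+a+b+c+d+1) ≥ b*(b+1)*c*(c+1); (vii) (a+1)*(b*c+b*d+c*d+b+c+d+1) ≥ b*c*d; (viii) b*c+b*d+c*d+b+c+d+1 ≥ c*(c+1); (ix) (b+1)*(c+d+1) ≥ c*d; (x) c+1 ≥ d. -/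
/-- The ten necessary inequalities for an arithmetic Y-frieze
pattern of width 4. -/
theorem yfrieze4_inequalities
    (a b c d e f g h i j k l m n : ℕ)
    (ha : 0 < a) (hb : 0 < b) (hc : 0 < c) (hd : 0 < d) (he : 0 < e)
    (hf : 0 < f) (hg : 0 < g) (hh : 0 < h) (hi : 0 < i) (hj : 0 < j)
    (hk : 0 < k) (hl : 0 < l) (hm : 0 < m) (hn : 0 < n)
    (e1 : a * e = 1 + b)
    (e2 : b * f = (1 + e) * (1 + c))
    (e3 : c * g = (1 + f) * (1 + d))
    (e4 : d * h = 1 + g)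
    (e5 : e * i = 1 + f)
    (e6 : f * j = (1 + i) * (1 + g))
    (e7 : g * k = (1 + j) * (1 + h))
    (e8 : i * l = 1 + j)
    (e9 : j * m = (1 + l) * (1 + k))
    (e10 : l * n = 1 + m) :
    b + 1 ≥ a ∧
    (c + 1) * (a + b + 1) ≥ a * b ∧
    (d + 1) * (a * b + a * c + b * c + a + b + c + 1) ≥ a * b * c ∧
    a * b * c + a * b * d + a * c * d + b * c * d + a * b + a * c + a * d +
      b * c + b * d + c * d + a + b + c + d + 1 ≥ a * b * c * d ∧
    a * b + a * c + b * c + a + b + c + 1 ≥ b * (b + 1) ∧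
    (b + c + 1) *
      (a * b * c + a * b * d + a * c * d + b * c * d + a * b + a * c + a * d +
        b * c + b * d + c * d + a + b + c + d + 1) ≥ b * (b + 1) * c * (c + 1) ∧
    (a + 1) * (b * c + b * d + c * d + b + c + d + 1) ≥ b * c * d ∧
    b * c + b * d + c * d + b + c + d + 1 ≥ c * (c + 1) ∧
    (b + 1) * (c + d + 1) ≥ c * d ∧
    c + 1 ≥ d := by

  -- integer versions of hypotheses
  have Ha : (1:ℤ) ≤ a := by exact_mod_cast ha
  have Hb : (1:ℤ) ≤ b := by exact_mod_cast hb
  have Hc : (1:ℤ) ≤ c := by exact_mod_cast hc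
  have Hd : (1:ℤ) ≤ d := by exact_mod_cast hd
  have He : (1:ℤ) ≤ e := by exact_mod_cast he
  have Hf : (1:ℤ) ≤ f := by exact_mod_cast hf
  have Hg : (1:ℤ) ≤ g := by exact_mod_cast hg
  have Hh : (1:ℤ) ≤ h := by exact_mod_cast hh
  have Hi : (1:ℤ) ≤ i := by exact_mod_cast hi
  have Hj : (1:ℤ) ≤ j := by exact_mod_cast hj
  have Hk : (1:ℤ) ≤ k := by exact_mod_cast hk
  have Hl : (1:ℤ) ≤ l := by exact_mod_cast hl
  have Hm : (1:ℤ) ≤ m := by exact_mod_cast hm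
  have Hn : (1:ℤ) ≤ n := by exact_mod_cast hn
  have E1 : (a:ℤ) * e = 1 + b := by exact_mod_cast e1
  have E2 : (b:ℤ) * f = (1 + e) * (1 + c) := by exact_mod_cast e2
  have E3 : (c:ℤ) * g = (1 + f) * (1 + d) := by exact_mod_cast e3
  have E4 : (d:ℤ) * h = 1 + g := by exact_mod_cast e4
  have E5 : (e:ℤ) * i = 1 + f := by exact_mod_cast e5
  have E6 : (f:ℤ) * j = (1 + i) * (1 + g) := by exact_mod_cast e6
  have E7 : (g:ℤ) * k = (1 + j) * (1 + h) := by exact_mod_cast e7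
  have E8 : (i:ℤ) * l = 1 + j := by exact_mod_cast e8
  have E9 : (j:ℤ) * m = (1 + l) * (1 + k) := by exact_mod_cast e9
  have E10 : (l:ℤ) * n = 1 + m := by exact_mod_cast e10
  -- closed forms
  have F2 : (a:ℤ) * b * f = (a + b + 1) * (c + 1) := by
    linear_combination (a:ℤ) * E2 + (1 + (c:ℤ)) * E1
  have F3 : (a:ℤ) * b * c * g = (1 + d) * (a*b + a*c + b*c + a + b + c + 1) := by
    linear_combination (a:ℤ) * b * E3 + (1 + (d:ℤ)) * F2
  have F4 : (a:ℤ) * b * c * d * h =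
      a*b*c + a*b*d + a*c*d + b*c*d + a*b + a*c + a*d + b*c + b*d + c*d
        + a + b + c + d + 1 := by
    linear_combination (a:ℤ) * b * c * E4 + F3
  have F5 : (b:ℤ) * (b + 1) * i = a*b + a*c + b*c + a + b + c + 1 := by
    linear_combination (a:ℤ) * b * E5 - (b:ℤ) * i * E1 + F2
  have F6 : (b:ℤ) * (b + 1) * c * (c + 1) * j =
      (b + c + 1) * (a*b*c + a*b*d + a*c*d + b*c*d + a*b + a*c + a*d + b*c
        + b*d + c*d + a + b + c + d + 1) := by
    have hne : ((a:ℤ) + b + 1) ≠ 0 := by positivity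
    apply mul_left_cancel₀ hne
    linear_combination ((a:ℤ) * b^2 * (b+1) * c) * E6
      - ((b:ℤ) * (b+1) * c * j) * F2
      + ((a:ℤ) * b * c * (1 + g)) * F5
      + (((a:ℤ) + b + 1) * (b + c + 1)) * F3
  have F7 : (b:ℤ) * c * d * k = (a + 1) * (b*c + b*d + c*d + b + c + d + 1) := by
    have hne : ((a:ℤ)*b + a*c + b*c + a + b + c + 1) * (1 + d) * (b + 1) * (c + 1) ≠ 0 := by
      positivity
    apply mul_left_cancel₀ hne
    linear_combination
      (-((b:ℤ) * (b+1) * c * (c+1) * d * k)) * F3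
      + ((b:ℤ) * (b+1) * c * (c+1) * a * b * c * d) * E7
      + ((a:ℤ) * b * c * d * (1 + h)) * F6
      + (((a:ℤ)*b + a*c + b*c + a + b + c + 1)
          * ((b:ℤ)*c + b*d + c*d + b + c + d + 1)) * F4
  have F8 : (c:ℤ) * (c + 1) * l = b*c + b*d + c*d + b + c + d + 1 := by
    have hne : ((a:ℤ)*b + a*c + b*c + a + b + c + 1) ≠ 0 := by positivity
    apply mul_left_cancel₀ hne
    linear_combination (-((c:ℤ) * (c+1) * l)) * F5
      + ((b:ℤ) * (b+1) * c * (c+1)) * E8 + F6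
  have F9 : (c:ℤ) * d * m = (b + 1) * (c + d + 1) := by
    have hne : ((b:ℤ)) * ((b:ℤ) + c + 1)
        * ((a:ℤ)*b*c + a*b*d + a*c*d + b*c*d + a*b + a*c + a*d + b*c + b*d
            + c*d + a + b + c + d + 1) ≠ 0 := by positivity
    apply mul_left_cancel₀ hne
    linear_combination (-((b:ℤ) * c * d * m)) * F6
      + ((b:ℤ) * (b+1) * c * (c+1) * b * c * d) * E9
      + ((b:ℤ) * (b+1) * b * c * d * (1 + k)) * F8
      + ((b:ℤ) * (b+1) * (b + c + 1) * (c + d + 1)) * F7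
  have F10 : (d:ℤ) * n = c + 1 := by
    have hne : ((b:ℤ)*c + b*d + c*d + b + c + d + 1) * c ≠ 0 := by positivity
    apply mul_left_cancel₀ hne
    linear_combination (-((c:ℤ) * d * n)) * F8
      + ((c:ℤ) * (c+1) * c * d) * E10
      + ((c:ℤ) * (c+1)) * F9
  refine ⟨?_, ?_, ?_, ?_, ?_, ?_, ?_, ?_, ?_, ?_⟩
  · zify
    linarith [E1, mul_le_mul_of_nonneg_left He (show (0:ℤ) ≤ a by positivity)]
  · zify
    linarith [F2, mul_le_mul_of_nonneg_left Hf (show (0:ℤ) ≤ (a:ℤ)*b by positivity)]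
  · zify
    linarith [F3, mul_le_mul_of_nonneg_left Hg (show (0:ℤ) ≤ (a:ℤ)*b*c by positivity)]
  · zify
    linarith [F4, mul_le_mul_of_nonneg_left Hh (show (0:ℤ) ≤ (a:ℤ)*b*c*d by positivity)]
  · zify
    linarith [F5, mul_le_mul_of_nonneg_left Hi (show (0:ℤ) ≤ (b:ℤ)*(b+1) by positivity)]
  · zify
    linarith [F6, mul_le_mul_of_nonneg_left Hj
      (show (0:ℤ) ≤ (b:ℤ)*(b+1)*c*(c+1) by positivity)]
  · zify
    linarith [F7, mul_le_mul_of_nonneg_left Hk (show (0:ℤ) ≤ (b:ℤ)*c*d by positivity)]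
  · zify
    linarith [F8, mul_le_mul_of_nonneg_left Hl (show (0:ℤ) ≤ (c:ℤ)*(c+1) by positivity)]
  · zify
    linarith [F9, mul_le_mul_of_nonneg_left Hm (show (0:ℤ) ≤ (c:ℤ)*d by positivity)]
  · zify
    linarith [F10, mul_le_mul_of_nonneg_left Hn (show (0:ℤ) ≤ (d:ℤ) by positivity)]
end

section
/- Let a, b, c, d be positive integers with b+1 ≥ a and c+1 ≥ d. If a > 5 and d > 5, then a*b*c+a*b*d+a*c*d+b*c*d+a*b+a*c+a*d+b*c+b*d+c*d+a+b+c+d+1 < a*b*c*d (i.e., inequality (iv) is not satisfied). Equivalently, under these hypotheses (a+1)*(b+1)*(c+1)*(d+1) < 2*a*b*c*d. -/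
/-- Proposition 3.1: if a > 5 and d > 5 then inequality (iv)
fails. -/
theorem yfrieze4_prop31
    (a b c d : ℕ) (ha : 0 < a) (hb : 0 < b) (hc : 0 < c) (hd : 0 < d)
    (h1 : b + 1 ≥ a) (h10 : c + 1 ≥ d)
    (ha5 : a > 5) (hd5 : d > 5) :
    a * b * c + a * b * d + a * c * d + b * c * d + a * b + a * c + a * d +
      b * c + b * d + c * d + a + b + c + d + 1 < a * b * c * d ∧
    (a + 1) * (b + 1) * (c + 1) * (d + 1) < 2 * (a * b * c * d) := by
  have hb5 : b ≥ 5 := by omega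
  have hc5 : c ≥ 5 := by omega
  have h1a : 6 * (a + 1) ≤ 7 * a := by omega
  have h1b : 5 * (b + 1) ≤ 6 * b := by omega
  have h1c : 5 * (c + 1) ≤ 6 * c := by omega
  have h1d : 6 * (d + 1) ≤ 7 * d := by omega
  have key : 900 * ((a + 1) * (b + 1) * (c + 1) * (d + 1)) ≤ 1764 * (a * b * c * d) := by
    calc 900 * ((a + 1) * (b + 1) * (c + 1) * (d + 1))
        = (6 * (a + 1)) * (5 * (b + 1)) * (5 * (c + 1)) * (6 * (d + 1)) := by ring
      _ ≤ (7 * a) * (6 * b) * (6 * c) * (7 * d) := by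
          apply Nat.mul_le_mul (Nat.mul_le_mul (Nat.mul_le_mul h1a h1b) h1c) h1d
      _ = 1764 * (a * b * c * d) := by ring
  have h2 : (a + 1) * (b + 1) * (c + 1) * (d + 1) < 2 * (a * b * c * d) := by
    nlinarith [key, (by positivity : 0 < a * b * c * d)]
  refine ⟨?_, h2⟩
  have : (a + 1) * (b + 1) * (c + 1) * (d + 1) =
      a * b * c + a * b * d + a * c * d + b * c * d + a * b + a * c + a * d +
      b * c + b * d + c * d + a + b + c + d + 1 + a * b * c * d := by ring
  omega
end

section
/- Let a, b, c, d be positive integers with c+1 ≥ d and a ≤ 5. If b > 19 and d > 19, then (a+1)*(b*c+b*d+c*d+b+c+d+1) < b*c*d (i.e., inequality (vii) is not satisfied). -/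
/-- Proposition 3.2: if a ≤ 5, b > 19 and d > 19 then
inequality (vii) fails. -/
theorem yfrieze4_prop32
    (a b c d : ℕ) (ha : 0 < a) (hb : 0 < b) (hc : 0 < c) (hd : 0 < d)
    (h10 : c + 1 ≥ d) (ha5 : a ≤ 5)
    (hb19 : b > 19) (hd19 : d > 19) :
    (a + 1) * (b * c + b * d + c * d + b + c + d + 1) < b * c * d := by
  have hc19 : c ≥ 19 := by omega
  have hb20 : b ≥ 20 := hb19
  have hd20 : d ≥ 20 := hd19
  have h6 : a + 1 ≤ 6 := by omega
  have h1 : b * c * 20 ≤ b * c * d := Nat.mul_le_mul_left _ hd20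
  have h2 : b * 19 * d ≤ b * c * d :=
    Nat.mul_le_mul (Nat.mul_le_mul_left _ hc19) le_rfl
  have h3 : 20 * c * d ≤ b * c * d :=
    Nat.mul_le_mul (Nat.mul_le_mul_right _ hb20) le_rfl
  have h4 : b * 19 * 20 ≤ b * c * d :=
    Nat.mul_le_mul (Nat.mul_le_mul_left _ hc19) hd20
  have h5' : 20 * c * 20 ≤ b * c * d :=
    Nat.mul_le_mul (Nat.mul_le_mul_right _ hb20) hd20
  have h7 : 20 * 19 * d ≤ b * c * d :=
    Nat.mul_le_mul (Nat.mul_le_mul hb20 hc19) le_rfl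
  have h8 : 20 * 19 * 20 ≤ b * c * d :=
    Nat.mul_le_mul (Nat.mul_le_mul hb20 hc19) hd20
  calc (a + 1) * (b * c + b * d + c * d + b + c + d + 1)
      ≤ 6 * (b * c + b * d + c * d + b + c + d + 1) :=
        Nat.mul_le_mul_right _ h6
    _ < b * c * d := by nlinarith [h1, h2, h3, h4, h5', h7, h8]
end

section
/- Let a, b, c, d, e, f, g, h, i, j, k, l, m, n be positive integers satisfying the ten diamond equations a*e = 1+b, b*f = (1+e)*(1+c), c*g = (1+f)*(1+d), d*h = 1+g, e*i = 1+f, f*j = (1+i)*(1+g), g*k = (1+j)*(1+h), i*l = 1+j, j*m = (1+l)*(1+k), l*n = 1+m. Then at least one of the following four cases holds: (a ≤ 5 and b ≤ 102 and c ≤ 168 and d ≤ 41), or (a ≤ 5 and b ≤ 168 and c ≤ 102 and d ≤ 41), or (a ≤ 41 and b ≤ 102 and c ≤ 168 and d ≤ 5), or (a ≤ 41 and b ≤ 168 and c ≤ 102 and d ≤ 5). -/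
def aB : ℕ → (ℕ → Bool) → Bool
  | 0, _ => true
  | n+1, f => f n && aB n f

theorem aB_true {f : ℕ → Bool} : ∀ {n : ℕ}, aB n f = true → ∀ m, m < n → f m = true := by
  intro n
  induction n with
  | zero => intro _ m hm; exact absurd hm (by omega)
  | succ p ih =>
    intro h m hm
    simp only [aB, Bool.and_eq_true] at h
    rcases Nat.lt_or_ge m p with h2 | h2
    · exact ih h.2 m h2
    · have : m = p := by omega
      subst this; exact h.1

theorem orStep {g y : Bool} (h : (!g || y) = true) (hg : g = true) : y = true := by
  subst hg; simpa using h

def wN (e i l a n : ℕ) : Bool :=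
  let f := e*i-1; let j := i*l-1; let g := f*j/(1+i)-1; let b := a*e-1; let c := b*f/(1+e)-1; let d := c*g/(1+f)-1;
  !(decide (1 ≤ n) && (decide (1 ≤ l*n-1) && (j*(l*n-1) == (1+l)*(1+((1+j)*(1+((1+g)/d))/g))))) ||
  ((decide (a ≤ 5) && (decide (b ≤ 102) && (decide (c ≤ 168) && decide (d ≤ 41)))) ||
   ((decide (a ≤ 5) && (decide (b ≤ 168) && (decide (c ≤ 102) && decide (d ≤ 41)))) ||
    ((decide (a ≤ 41) && (decide (b ≤ 102) && (decide (c ≤ 168) && decide (d ≤ 5)))) ||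
     (decide (a ≤ 41) && (decide (b ≤ 168) && (decide (c ≤ 102) && decide (d ≤ 5)))))))

def wA (e i l a : ℕ) : Bool :=
  let f := e*i-1; let j := i*l-1; let g := f*j/(1+i)-1; let b := a*e-1; let c := b*f/(1+e)-1; let d := c*g/(1+f)-1; let h := (1+g)/d; let k := (1+j)*(1+h)/g;
  !(decide (1 ≤ a) && (decide (1 ≤ b) && ((b*f == (1+e)*(1+c)) && (decide (1 ≤ c) && ((c*g == (1+f)*(1+d)) && (decide (1 ≤ d) && ((d*h == 1+g) && (decide (1 ≤ h) && ((g*k == (1+j)*(1+h)) && decide (1 ≤ k)))))))))) ||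
  aB 16 (wN e i l a)

def wL (e i l : ℕ) : Bool :=
  let f := e*i-1; let j := i*l-1;
  !(decide (1 ≤ l) && (decide (i*l ≤ 193) && (decide (2 ≤ i*l) && (decide (f*j ≤ 64*(1+i)) && ((f*j == (1+i)*(1+(f*j/(1+i)-1))) && decide (1 ≤ f*j/(1+i)-1)))))) ||
  aB 16 (wA e i l)

def wI (e i : ℕ) : Bool :=
  !(decide (1 ≤ e) && (decide (1 ≤ i) && (decide (e*i ≤ 193) && decide (2 ≤ e*i)))) ||
  aB 130 (wL e i)

def chk : Bool := aB 130 (fun e => aB 67 (wI e))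

set_option maxRecDepth 1000000 in
set_option maxHeartbeats 20000000 in
theorem chk_true : chk = true := by decide

theorem helper (E I L A N F J G B C D H K M : ℕ)
    (hE : 1 ≤ E) (hI : 1 ≤ I) (hL : 1 ≤ L) (hA1 : 1 ≤ A) (hN1 : 1 ≤ N)
    (hE129 : E ≤ 129) (hI66 : I ≤ 66) (hL129 : L ≤ 129) (hA15 : A ≤ 15) (hN15 : N ≤ 15)
    (hPle : E*I ≤ 193) (hP2 : 2 ≤ E*I) (hQle : I*L ≤ 193) (hQ2 : 2 ≤ I*L)
    (hF : F = E*I - 1) (hJ : J = I*L - 1) (hB : B = A*E - 1)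
    (hG : G = F*J/(1+I) - 1) (hC : C = B*F/(1+E) - 1) (hD : D = C*G/(1+F) - 1)
    (hH : H = (1+G)/D) (hK : K = (1+J)*(1+H)/G) (hM : M = L*N - 1)
    (hB1 : 1 ≤ B) (hC1 : 1 ≤ C) (hD1 : 1 ≤ D) (hG1 : 1 ≤ G) (hH1 : 1 ≤ H) (hK1 : 1 ≤ K) (hM1 : 1 ≤ M)
    (hGrange : F*J ≤ 64*(1+I))
    (he2 : B*F = (1+E)*(1+C)) (he3 : C*G = (1+F)*(1+D)) (he4 : D*H = 1+G)
    (he6 : F*J = (1+I)*(1+G)) (he7 : G*K = (1+J)*(1+H)) (he9 : J*M = (1+L)*(1+K)) :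
    (A ≤ 5 ∧ B ≤ 102 ∧ C ≤ 168 ∧ D ≤ 41) ∨
    (A ≤ 5 ∧ B ≤ 168 ∧ C ≤ 102 ∧ D ≤ 41) ∨
    (A ≤ 41 ∧ B ≤ 102 ∧ C ≤ 168 ∧ D ≤ 5) ∨
    (A ≤ 41 ∧ B ≤ 168 ∧ C ≤ 102 ∧ D ≤ 5) := by
  subst hF; subst hJ; subst hB; subst hG; subst hC; subst hD; subst hH; subst hK; subst hM
  have h0 := chk_true
  have s1 : aB 67 (wI E) = true := aB_true h0 E (by omega)
  have s2 : wI E I = true := aB_true s1 I (by omega)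
  simp only [wI] at s2
  have s3 : aB 130 (wL E I) = true := by
    refine orStep s2 ?_
    simp only [Bool.and_eq_true, decide_eq_true_eq]
    exact ⟨hE, hI, hPle, hP2⟩
  have s4 : wL E I L = true := aB_true s3 L (by omega)
  simp only [wL] at s4
  have s5 : aB 16 (wA E I L) = true := by
    refine orStep s4 ?_
    simp only [Bool.and_eq_true, decide_eq_true_eq, beq_iff_eq]
    exact ⟨hL, hQle, hQ2, hGrange, he6, hG1⟩
  have s6 : wA E I L A = true := aB_true s5 A (by omega)
  simp only [wA] at s6
  have s7 : aB 16 (wN E I L A) = true := by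
    refine orStep s6 ?_
    simp only [Bool.and_eq_true, decide_eq_true_eq, beq_iff_eq]
    exact ⟨hA1, hB1, he2, hC1, he3, hD1, he4, hH1, he7, hK1⟩
  have s8 : wN E I L A N = true := aB_true s7 N (by omega)
  simp only [wN] at s8
  have s9 := orStep s8 (by
    simp only [Bool.and_eq_true, decide_eq_true_eq, beq_iff_eq]
    exact ⟨hN1, hM1, he9⟩)
  simpa only [Bool.or_eq_true, Bool.and_eq_true, decide_eq_true_eq] using s9

set_option maxHeartbeats 1000000 in
/-- Lemma: bounds for the first diagonal of an arithmetic
Y-frieze pattern of width 4. -/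
theorem yfrieze4_bounds
    (a b c d e f g h i j k l m n : ℕ)
    (ha : 0 < a) (hb : 0 < b) (hc : 0 < c) (hd : 0 < d) (he : 0 < e)
    (hf : 0 < f) (hg : 0 < g) (hh : 0 < h) (hi : 0 < i) (hj : 0 < j)
    (hk : 0 < k) (hl : 0 < l) (hm : 0 < m) (hn : 0 < n)
    (e1 : a * e = 1 + b)
    (e2 : b * f = (1 + e) * (1 + c))
    (e3 : c * g = (1 + f) * (1 + d))
    (e4 : d * h = 1 + g)
    (e5 : e * i = 1 + f)
    (e6 : f * j = (1 + i) * (1 + g))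
    (e7 : g * k = (1 + j) * (1 + h))
    (e8 : i * l = 1 + j)
    (e9 : j * m = (1 + l) * (1 + k))
    (e10 : l * n = 1 + m) :
    (a ≤ 5 ∧ b ≤ 102 ∧ c ≤ 168 ∧ d ≤ 41) ∨
    (a ≤ 5 ∧ b ≤ 168 ∧ c ≤ 102 ∧ d ≤ 41) ∨
    (a ≤ 41 ∧ b ≤ 102 ∧ c ≤ 168 ∧ d ≤ 5) ∨
    (a ≤ 41 ∧ b ≤ 168 ∧ c ≤ 102 ∧ d ≤ 5) := by
  -- d ≤ 1+g and h ≤ 1+g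
  have hd1 : d ≤ 1 + g := by
    have t : d*1 ≤ d*h := Nat.mul_le_mul (le_refl d) hh
    rw [mul_one, e4] at t; exact t
  have hh1 : h ≤ 1 + g := by
    have t : 1*h ≤ d*h := Nat.mul_le_mul hd (le_refl h)
    rw [one_mul, e4] at t; exact t
  -- 1+e ≤ 3b
  have h3b : 1 + e ≤ 3*b := by
    rcases Nat.lt_or_ge a 2 with h2 | h2
    · have ha1 : a = 1 := by omega
      rw [ha1, one_mul] at e1
      omega
    · obtain ⟨t, rfl⟩ : ∃ t, a = 2 + t := ⟨a - 2, by omega⟩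
      have hx : 2*e + t*e = 1 + b := by rw [← e1]; ring
      set u := t*e with hu
      omega
  -- 1+l ≤ 3m
  have h3m : 1 + l ≤ 3*m := by
    rcases Nat.lt_or_ge n 2 with h2 | h2
    · have hn1 : n = 1 := by omega
      rw [hn1, mul_one] at e10
      omega
    · obtain ⟨t, rfl⟩ : ∃ t, n = 2 + t := ⟨n - 2, by omega⟩
      have hx : 2*l + l*t = 1 + m := by rw [← e10]; ring
      set u := l*t with hu
      omega
  -- f ≤ 3(1+c), j ≤ 3(1+k)
  have hf3c : f ≤ 3*(1+c) := by
    have t : b*f ≤ b*(3*(1+c)) := by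
      calc b*f = (1+e)*(1+c) := e2
        _ ≤ (3*b)*(1+c) := Nat.mul_le_mul h3b (le_refl _)
        _ = b*(3*(1+c)) := by ring
    exact Nat.le_of_mul_le_mul_left t hb
  have hj3k : j ≤ 3*(1+k) := by
    have t : m*j ≤ m*(3*(1+k)) := by
      calc m*j = j*m := by ring
        _ = (1+l)*(1+k) := e9
        _ ≤ (3*m)*(1+k) := Nat.mul_le_mul h3m (le_refl _)
        _ = m*(3*(1+k)) := by ring
    exact Nat.le_of_mul_le_mul_left t hm
  -- the key identity g(ck) = c(1+j) + k(1+f) + (1+f)(1+j)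
  have A2 : (1+d)*(1+h) = 2 + d + h + g := by
    have t : (1+d)*(1+h) = 1 + d + h + d*h := by ring
    rw [t, e4]; omega
  have A3 : (c*g)*(1+j) + (g*k)*(1+f) = ((1+f)*(1+j))*(2+d+h) := by
    rw [e3, e7]; ring
  have A4 : g*(g*(c*k)) = g*(c*(1+j) + k*(1+f) + (1+f)*(1+j)) := by
    calc g*(g*(c*k)) = (c*g)*(g*k) := by ring
      _ = ((1+f)*(1+d))*((1+j)*(1+h)) := by rw [e3, e7]
      _ = ((1+f)*(1+j))*((1+d)*(1+h)) := by ring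
      _ = ((1+f)*(1+j))*(2+d+h+g) := by rw [A2]
      _ = ((1+f)*(1+j))*(2+d+h) + ((1+f)*(1+j))*g := by ring
      _ = ((c*g)*(1+j) + (g*k)*(1+f)) + ((1+f)*(1+j))*g := by rw [A3]
      _ = g*(c*(1+j) + k*(1+f) + (1+f)*(1+j)) := by ring
  have key : g*(c*k) = c*(1+j) + k*(1+f) + (1+f)*(1+j) :=
    Nat.eq_of_mul_eq_mul_left hg A4
  -- g ≤ 63
  have hsum : g*(c*k) ≤ 15*(c*k) + 16*c + 16*k + 16 := by
    calc g*(c*k) = c*(1+j) + k*(1+f) + (1+f)*(1+j) := key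
      _ ≤ c*(3*k+4) + k*(3*c+4) + (3*c+4)*(3*k+4) :=
          add_le_add (add_le_add (Nat.mul_le_mul (le_refl c) (by omega))
            (Nat.mul_le_mul (le_refl k) (by omega)))
            (Nat.mul_le_mul (by omega) (by omega))
      _ = 15*(c*k) + 16*c + 16*k + 16 := by ring
  have hc_ck : c ≤ c*k := by
    have t : c*1 ≤ c*k := Nat.mul_le_mul (le_refl c) hk
    rwa [mul_one] at t
  have hk_ck : k ≤ c*k := by
    have t : 1*k ≤ c*k := Nat.mul_le_mul hc (le_refl k)
    rwa [one_mul] at t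
  have hck1 : 0 < c*k := Nat.mul_pos hc hk
  have haux : ∀ w : ℕ, c ≤ w → k ≤ w → 1 ≤ w → 15*w + 16*c + 16*k + 16 ≤ 63*w := by
    intro w t1 t2 t3; omega
  have hg63 : g ≤ 63 :=
    Nat.le_of_mul_le_mul_right
      (le_trans hsum (haux (c*k) hc_ck hk_ck hck1)) hck1
  have hGrange : f*j ≤ 64*(1+i) := by
    rw [e6]
    calc (1+i)*(1+g) ≤ (1+i)*64 := Nat.mul_le_mul (le_refl _) (by omega)
      _ = 64*(1+i) := by ring
  -- simple products bounds
  have hi_f : i ≤ 1 + f := by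
    have t : 1*i ≤ e*i := Nat.mul_le_mul he (le_refl i)
    rwa [one_mul, e5] at t
  have he_f : e ≤ 1 + f := by
    have t : e*1 ≤ e*i := Nat.mul_le_mul (le_refl e) hi
    rwa [mul_one, e5] at t
  have hi_j : i ≤ 1 + j := by
    have t : i*1 ≤ i*l := Nat.mul_le_mul (le_refl i) hl
    rwa [mul_one, e8] at t
  have hl_j : l ≤ 1 + j := by
    have t : 1*l ≤ i*l := Nat.mul_le_mul hi (le_refl l)
    rwa [one_mul, e8] at t
  -- f ≤ 192 and j ≤ 192
  have hf192 : f ≤ 192 := by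
    rcases Nat.lt_or_ge i 2 with h2 | h2
    · have hi1 : i = 1 := by omega
      have t : f*1 ≤ f*j := Nat.mul_le_mul (le_refl f) hj
      rw [hi1] at hGrange
      set z := f*j with hz
      omega
    · have h3j : 1 + i ≤ 3*j := by omega
      have t5 : f*(1+i) ≤ 192*(1+i) := by
        calc f*(1+i) ≤ f*(3*j) := Nat.mul_le_mul (le_refl f) h3j
          _ = 3*(f*j) := by ring
          _ ≤ 3*(64*(1+i)) := Nat.mul_le_mul (le_refl 3) hGrange
          _ = 192*(1+i) := by ring
      exact Nat.le_of_mul_le_mul_right t5 (by omega)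
  have hj192 : j ≤ 192 := by
    rcases Nat.lt_or_ge i 2 with h2 | h2
    · have hi1 : i = 1 := by omega
      have t : 1*j ≤ f*j := Nat.mul_le_mul hf (le_refl j)
      rw [hi1] at hGrange
      set z := f*j with hz
      omega
    · have h3f : 1 + i ≤ 3*f := by omega
      have t5 : j*(1+i) ≤ 192*(1+i) := by
        calc j*(1+i) ≤ j*(3*f) := Nat.mul_le_mul (le_refl j) h3f
          _ = 3*(f*j) := by ring
          _ ≤ 3*(64*(1+i)) := Nat.mul_le_mul (le_refl 3) hGrange
          _ = 192*(1+i) := by ring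
      exact Nat.le_of_mul_le_mul_right t5 (by omega)
  have hPle : e*i ≤ 193 := by rw [e5]; omega
  have hQle : i*l ≤ 193 := by rw [e8]; omega
  -- e ≤ 129, i ≤ 66, l ≤ 129
  have he129 : e ≤ 129 := by
    rcases Nat.lt_or_ge i 2 with h2 | h2
    · have hi1 : i = 1 := by omega
      rw [hi1, mul_one] at e5
      -- need f ≤ 128 in this case
      have t : f*1 ≤ f*j := Nat.mul_le_mul (le_refl f) hj
      rw [hi1] at hGrange
      set z := f*j with hz
      omega
    · have t : e*2 ≤ e*i := Nat.mul_le_mul (le_refl e) h2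
      set z := e*i with hz
      omega
  have hl129 : l ≤ 129 := by
    rcases Nat.lt_or_ge i 2 with h2 | h2
    · have hi1 : i = 1 := by omega
      rw [hi1, one_mul] at e8
      have t : 1*j ≤ f*j := Nat.mul_le_mul hf (le_refl j)
      rw [hi1] at hGrange
      set z := f*j with hz
      omega
    · have t : l*2 ≤ i*l := by
        calc l*2 = 2*l := by ring
          _ ≤ i*l := Nat.mul_le_mul h2 (le_refl l)
      set z := i*l with hz
      omega
  have hi66 : i ≤ 66 := by
    by_contra hcon
    push_neg at hcon
    obtain ⟨t0, rfl⟩ : ∃ t0, i = 67 + t0 := ⟨i - 67, by omega⟩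
    have t : (66+t0)*(66+t0) ≤ f*j := Nat.mul_le_mul (by omega) (by omega)
    have texp : (66+t0)*(66+t0) = 4356 + 132*t0 + t0*t0 := by ring
    rw [texp] at t
    set z := f*j with hz
    set u := t0*t0 with hu
    omega
  -- a ≤ 15 and n ≤ 15
  have hc3 : c ≤ 3*(1+f) := by
    have t : c*g ≤ (3*(1+f))*g := by
      calc c*g = (1+f)*(1+d) := e3
        _ ≤ (1+f)*(3*g) := Nat.mul_le_mul (le_refl _) (by omega)
        _ = (3*(1+f))*g := by ring
    exact Nat.le_of_mul_le_mul_right t hg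
  have hk3 : k ≤ 3*(1+j) := by
    have t : g*k ≤ g*(3*(1+j)) := by
      calc g*k = (1+j)*(1+h) := e7
        _ ≤ (1+j)*(3*g) := Nat.mul_le_mul (le_refl _) (by omega)
        _ = g*(3*(1+j)) := by ring
    exact Nat.le_of_mul_le_mul_left t hg
  have hb7 : b ≤ 7*(1+e) := by
    have t : b*f ≤ (7*(1+e))*f := by
      calc b*f = (1+e)*(1+c) := e2
        _ ≤ (1+e)*(7*f) := Nat.mul_le_mul (le_refl _) (by omega)
        _ = (7*(1+e))*f := by ring
    exact Nat.le_of_mul_le_mul_right t hf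
  have hm7 : m ≤ 7*(1+l) := by
    have t : j*m ≤ j*(7*(1+l)) := by
      calc j*m = (1+l)*(1+k) := e9
        _ ≤ (1+l)*(7*j) := Nat.mul_le_mul (le_refl _) (by omega)
        _ = j*(7*(1+l)) := by ring
    exact Nat.le_of_mul_le_mul_left t hj
  have ha15 : a ≤ 15 := by
    have t : a*e ≤ 15*e := by rw [e1]; omega
    exact Nat.le_of_mul_le_mul_right t he
  have hn15 : n ≤ 15 := by
    have t : l*n ≤ l*15 := by rw [e10]; omega
    exact Nat.le_of_mul_le_mul_left t hl
  -- defining equalities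
  have hFeq : f = e*i - 1 := by rw [e5]; omega
  have hJeq : j = i*l - 1 := by rw [e8]; omega
  have hBeq : b = a*e - 1 := by rw [e1]; omega
  have hMeq : m = l*n - 1 := by rw [e10]; omega
  have hGeq : g = f*j/(1+i) - 1 := by
    rw [e6, Nat.mul_div_cancel_left _ (show 0 < 1+i by omega)]
    omega
  have hCeq : c = b*f/(1+e) - 1 := by
    rw [e2, Nat.mul_div_cancel_left _ (show 0 < 1+e by omega)]
    omega
  have hDeq : d = c*g/(1+f) - 1 := by
    rw [e3, Nat.mul_div_cancel_left _ (show 0 < 1+f by omega)]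
    omega
  have hHeq : h = (1+g)/d := by
    rw [← e4, Nat.mul_div_cancel_left _ hd]
  have hKeq : k = (1+j)*(1+h)/g := by
    rw [← e7, Nat.mul_div_cancel_left _ hg]
  have hP2 : 2 ≤ e*i := by rw [e5]; omega
  have hQ2 : 2 ≤ i*l := by rw [e8]; omega
  exact helper e i l a n f j g b c d h k m
    (by omega) (by omega) (by omega) (by omega) (by omega)
    he129 hi66 hl129 ha15 hn15
    hPle hP2 hQle hQ2
    hFeq hJeq hBeq hGeq hCeq hDeq hHeq hKeq hMeq
    (by omega) (by omega) (by omega) (by omega) (by omega) (by omega) (by omega)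
    hGrange e2 e3 e4 e6 e7 e9
end
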